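/- If Z > 0 is a C² solution of -Z'' + VZ - 1/(4Z³) = 0 on (a,b), then for any fixed y ∈ (a,b), the function G₀(x,y) := Z(x)Z(y)·exp(-∫_{min(x,y)}^{max(x,y)} dt/(2Z(t)²)) satisfies -∂²G₀/∂x² + V(x)G₀(x,y) = 0 for all x ≠ y in (a,b), and its x-derivative has a jump of -1 across x = y (i.e., ∂_x G₀(y⁺,y) - ∂_x G₀(y⁻,y) = -1). -/

import Mathlib

/-!
Put `Φ(x) = ∫_y^x dt / (2 Z(t)²)` and `u_s = Z · exp (s Φ)` for `s = ±1`. Then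
`u_s' = (Z' + s / (2Z)) exp (s Φ)` and, since `s² = 1`, `u_s'' = (Z'' + 1 / (4Z³)) exp (s Φ)`,
which is `V u_s` by the Ermakov–Pinney equation for `Z`. The Green function is `Z(y) u₁` left
of `y` and `Z(y) u₋₁` right of `y`, so it solves `-G'' + V G = 0` off the diagonal, and at `y`
(where `Φ = 0`) the one-sided slopes differ by `Z(y) (-1 / (2Z(y)) - 1 / (2Z(y))) = -1`.
-/

open Set Filter Topology

theorem hasDerivAt_integral_of_continuousOn_Ioo {E : Type*} [NormedAddCommGroup E]
    [NormedSpace ℝ E] [CompleteSpace E] {f : ℝ → E} {a b y x : ℝ}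
    (hf : ContinuousOn f (Ioo a b)) (hy : y ∈ Ioo a b) (hx : x ∈ Ioo a b) :
    HasDerivAt (fun u => ∫ t in y..u, f t) (f x) x :=
  intervalIntegral.integral_hasDerivAt_right
    ((hf.mono (ordConnected_Ioo.uIcc_subset hy hx)).intervalIntegrable)
    (hf.stronglyMeasurableAtFilter isOpen_Ioo x hx)
    (hf.continuousAt (isOpen_Ioo.mem_nhds hx))

noncomputable section

def bohlPhase (Z : ℝ → ℝ) (y x : ℝ) : ℝ :=
  ∫ t in y..x, 1 / (2 * Z t ^ 2)

def bohlSolution (Z : ℝ → ℝ) (y s x : ℝ) : ℝ :=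
  Z x * Real.exp (s * bohlPhase Z y x)

def bohlSolutionDeriv (Z : ℝ → ℝ) (y s x : ℝ) : ℝ :=
  (deriv Z x + s / (2 * Z x)) * Real.exp (s * bohlPhase Z y x)

def bohlGreen (Z : ℝ → ℝ) (y x : ℝ) : ℝ :=
  Z x * Z y * Real.exp (-∫ t in (min x y)..(max x y), 1 / (2 * Z t ^ 2))

end

section Derivatives

variable {Z : ℝ → ℝ} {y s x : ℝ}

theorem bohlPhase_self : bohlPhase Z y y = 0 :=
  intervalIntegral.integral_same

theorem hasDerivAt_bohlPhase {a b : ℝ} (hZ : ContinuousOn Z (Ioo a b))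
    (hZ0 : ∀ x ∈ Ioo a b, Z x ≠ 0) (hy : y ∈ Ioo a b) (hx : x ∈ Ioo a b) :
    HasDerivAt (bohlPhase Z y) (1 / (2 * Z x ^ 2)) x := by
  refine hasDerivAt_integral_of_continuousOn_Ioo ?_ hy hx
  exact continuousOn_const.div (continuousOn_const.mul (hZ.pow 2))
    fun t ht => by simp [hZ0 t ht]

theorem hasDerivAt_bohlSolution (hZ : HasDerivAt Z (deriv Z x) x) (hZx : Z x ≠ 0)
    (hΦ : HasDerivAt (bohlPhase Z y) (1 / (2 * Z x ^ 2)) x) :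
    HasDerivAt (bohlSolution Z y s) (bohlSolutionDeriv Z y s x) x := by
  refine (hZ.mul ((hΦ.const_mul s).exp)).congr_deriv ?_
  simp only [bohlSolutionDeriv]
  field_simp

theorem hasDerivAt_bohlSolutionDeriv {z'' : ℝ} (hs : s ^ 2 = 1)
    (hZ : HasDerivAt Z (deriv Z x) x) (hZ' : HasDerivAt (deriv Z) z'' x) (hZx : Z x ≠ 0)
    (hΦ : HasDerivAt (bohlPhase Z y) (1 / (2 * Z x ^ 2)) x) :
    HasDerivAt (bohlSolutionDeriv Z y s)
      ((z'' + 1 / (4 * Z x ^ 3)) * Real.exp (s * bohlPhase Z y x)) x := by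
  have hcoeff := hZ'.add ((hasDerivAt_const x s).div (hZ.const_mul 2) (by simpa using hZx))
  refine (hcoeff.mul ((hΦ.const_mul s).exp)).congr_deriv ?_
  simp only [Pi.add_apply, Pi.div_apply]
  field_simp
  linear_combination 4 * hs

end Derivatives

theorem ContDiffOn.hasDerivAt_deriv_of_isOpen {𝕜 F : Type*} [NontriviallyNormedField 𝕜]
    [NormedAddCommGroup F] [NormedSpace 𝕜 F] {f : 𝕜 → F} {s : Set 𝕜} {x : 𝕜}
    (hf : ContDiffOn 𝕜 1 f s) (hs : IsOpen s) (hx : x ∈ s) : HasDerivAt f (deriv f x) x :=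
  ((hf.differentiableOn one_ne_zero x hx).differentiableAt (hs.mem_nhds hx)).hasDerivAt

section Interval

variable {Z V : ℝ → ℝ} {a b y s x : ℝ}

theorem hasDerivAt_bohlSolution_of_mem (hZpos : ∀ x ∈ Ioo a b, 0 < Z x)
    (hZC1 : ContDiffOn ℝ 1 Z (Ioo a b)) (hy : y ∈ Ioo a b) (hx : x ∈ Ioo a b) :
    HasDerivAt (bohlSolution Z y s) (bohlSolutionDeriv Z y s x) x :=
  hasDerivAt_bohlSolution (hZC1.hasDerivAt_deriv_of_isOpen isOpen_Ioo hx) (hZpos x hx).ne'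
    (hasDerivAt_bohlPhase hZC1.continuousOn (fun t ht => (hZpos t ht).ne') hy hx)

theorem deriv_deriv_bohlSolution (hs : s ^ 2 = 1) (hZpos : ∀ x ∈ Ioo a b, 0 < Z x)
    (hZC2 : ContDiffOn ℝ 2 Z (Ioo a b))
    (hZode : -(deriv (deriv Z) x) + V x * Z x - 1 / (4 * Z x ^ 3) = 0)
    (hy : y ∈ Ioo a b) (hx : x ∈ Ioo a b) :
    deriv (deriv (bohlSolution Z y s)) x = V x * bohlSolution Z y s x := by
  have hZC1 : ContDiffOn ℝ 1 Z (Ioo a b) := hZC2.of_le (by norm_num)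
  have hZ'C1 : ContDiffOn ℝ 1 (deriv Z) (Ioo a b) := hZC2.deriv_of_isOpen isOpen_Ioo (by norm_num)
  have hderiv : deriv (bohlSolution Z y s) =ᶠ[𝓝 x] bohlSolutionDeriv Z y s :=
    eventually_of_mem (isOpen_Ioo.mem_nhds hx) fun u hu =>
      (hasDerivAt_bohlSolution_of_mem hZpos hZC1 hy hu).deriv
  have hΦ := hasDerivAt_bohlPhase hZC1.continuousOn (fun t ht => (hZpos t ht).ne') hy hx
  rw [hderiv.deriv_eq, (hasDerivAt_bohlSolutionDeriv hs
    (hZC1.hasDerivAt_deriv_of_isOpen isOpen_Ioo hx) (hZ'C1.hasDerivAt_deriv_of_isOpen isOpen_Ioo hx)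
    (hZpos x hx).ne' hΦ).deriv, bohlSolution]
  have hZ'' : deriv (deriv Z) x + 1 / (4 * Z x ^ 3) = V x * Z x := by linarith
  rw [hZ'', mul_assoc]

end Interval

section Green

variable {Z V : ℝ → ℝ} {a b y x : ℝ}

theorem bohlGreen_of_le (h : y ≤ x) : bohlGreen Z y x = Z y * bohlSolution Z y (-1) x := by
  simp only [bohlGreen, bohlSolution, bohlPhase, min_eq_right h, max_eq_left h]
  ring_nf

theorem bohlGreen_of_ge (h : x ≤ y) : bohlGreen Z y x = Z y * bohlSolution Z y 1 x := by
  simp only [bohlGreen, bohlSolution, bohlPhase, min_eq_left h, max_eq_right h,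
    intervalIntegral.integral_symm y x, neg_neg, one_mul]
  ring

theorem exists_bohlGreen_eventuallyEq (hx : x ≠ y) :
    ∃ s : ℝ, s ^ 2 = 1 ∧ bohlGreen Z y =ᶠ[𝓝 x] fun u => Z y * bohlSolution Z y s u := by
  rcases hx.lt_or_gt with hlt | hgt
  · exact ⟨1, one_pow 2, eventually_of_mem (Iio_mem_nhds hlt) fun u hu => bohlGreen_of_ge hu.le⟩
  · exact ⟨-1, by norm_num, eventually_of_mem (Ioi_mem_nhds hgt) fun u hu => bohlGreen_of_le hu.le⟩

theorem deriv_deriv_bohlGreen (hZpos : ∀ x ∈ Ioo a b, 0 < Z x)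
    (hZC2 : ContDiffOn ℝ 2 Z (Ioo a b))
    (hZode : -(deriv (deriv Z) x) + V x * Z x - 1 / (4 * Z x ^ 3) = 0)
    (hy : y ∈ Ioo a b) (hx : x ∈ Ioo a b) (hxy : x ≠ y) :
    deriv (deriv (bohlGreen Z y)) x = V x * bohlGreen Z y x := by
  obtain ⟨s, hs, hG⟩ := exists_bohlGreen_eventuallyEq (Z := Z) hxy
  rw [hG.deriv.deriv_eq, hG.eq_of_nhds, deriv_const_mul_field', deriv_const_mul_field']
  beta_reduce
  rw [deriv_deriv_bohlSolution hs hZpos hZC2 hZode hy hx]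
  ring

theorem derivWithin_bohlGreen_Ici (hZpos : ∀ x ∈ Ioo a b, 0 < Z x)
    (hZC1 : ContDiffOn ℝ 1 Z (Ioo a b)) (hy : y ∈ Ioo a b) :
    derivWithin (bohlGreen Z y) (Ici y) y = Z y * bohlSolutionDeriv Z y (-1) y :=
  (((hasDerivAt_bohlSolution_of_mem hZpos hZC1 hy hy).const_mul (Z y)).hasDerivWithinAt.congr_of_mem
    (fun _ hu => bohlGreen_of_le hu) self_mem_Ici).derivWithin (uniqueDiffOn_Ici y y self_mem_Ici)

theorem derivWithin_bohlGreen_Iic (hZpos : ∀ x ∈ Ioo a b, 0 < Z x)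
    (hZC1 : ContDiffOn ℝ 1 Z (Ioo a b)) (hy : y ∈ Ioo a b) :
    derivWithin (bohlGreen Z y) (Iic y) y = Z y * bohlSolutionDeriv Z y 1 y :=
  (((hasDerivAt_bohlSolution_of_mem hZpos hZC1 hy hy).const_mul (Z y)).hasDerivWithinAt.congr_of_mem
    (fun _ hu => bohlGreen_of_ge hu) self_mem_Iic).derivWithin (uniqueDiffOn_Iic y y self_mem_Iic)

end Green

theorem bohl_green_function_general
    (V Z : ℝ → ℝ) (a b : ℝ)
    (hZpos : ∀ x ∈ Set.Ioo a b, 0 < Z x)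
    (hZC2 : ContDiffOn ℝ 2 Z (Set.Ioo a b))
    (hZode : ∀ x ∈ Set.Ioo a b,
      -(deriv (deriv Z) x) + V x * Z x - 1 / (4 * (Z x) ^ 3) = 0)
    (y : ℝ) (hy : y ∈ Set.Ioo a b)
    (G : ℝ → ℝ)
    (hG : ∀ x, G x = Z x * Z y *
      Real.exp (-∫ t in (min x y)..(max x y), 1 / (2 * (Z t) ^ 2))) :
    (∀ x ∈ Set.Ioo a b, x ≠ y → -(deriv (deriv G) x) + V x * G x = 0) ∧
    derivWithin G (Set.Ici y) y - derivWithin G (Set.Iic y) y = -1 := by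
  obtain rfl : G = bohlGreen Z y := funext hG
  have hZC1 : ContDiffOn ℝ 1 Z (Ioo a b) := hZC2.of_le (by norm_num)
  refine ⟨fun x hx hxy => ?_, ?_⟩
  · rw [deriv_deriv_bohlGreen hZpos hZC2 (hZode x hx) hy hx hxy]
    ring
  · have hZy := (hZpos y hy).ne'
    rw [derivWithin_bohlGreen_Ici hZpos hZC1 hy, derivWithin_bohlGreen_Iic hZpos hZC1 hy]
    simp only [bohlSolutionDeriv, bohlPhase_self, mul_zero, Real.exp_zero, mul_one]
    field_simp
    ring

theorem bohl_green_function
    (V Z : ℝ → ℝ) (a b : ℝ)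
    (hV : ContinuousOn V (Set.Ioo a b))
    (hZpos : ∀ x ∈ Set.Ioo a b, 0 < Z x)
    (hZC2 : ContDiffOn ℝ 2 Z (Set.Ioo a b))
    (hZode : ∀ x ∈ Set.Ioo a b,
      -(deriv (deriv Z) x) + V x * Z x - 1 / (4 * (Z x) ^ 3) = 0)
    (y : ℝ) (hy : y ∈ Set.Ioo a b)
    (G : ℝ → ℝ)
    (hG : ∀ x, G x = Z x * Z y *
      Real.exp (-∫ t in (min x y)..(max x y), 1 / (2 * (Z t) ^ 2))) :
    (∀ x ∈ Set.Ioo a b, x ≠ y → -(deriv (deriv G) x) + V x * G x = 0) ∧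
    derivWithin G (Set.Ici y) y - derivWithin G (Set.Iic y) y = -1 :=
  bohl_green_function_general V Z a b hZpos hZC2 hZode y hy G hG
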